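/- Let m be a positive integer, let c be a real number with 1 ≤ c < 3/2, and let F ⊆ ℝ^{2m} be the set of tuples (y_1,…,y_m, z_1,…,z_m) with 1 ≤ y_i ≤ c and 1 ≤ z_i ≤ c for every i and Σ_{i=1}^m z_i² = Σ_{i=1}^m y_i·z_i. Suppose (y_1,…,y_m, z_1,…,z_m) ∈ F attains the maximum of Σ_{i=1}^m z_i²·y_i·e^{−z_i−y_i} over F. Then for every 1 ≤ i ≤ m, y_i = c or z_i = c. -/

import Mathlib

/-!
If some index had `y i < c` and `z i < c`, move `(y i, z i)` along the curve
`t ↦ (b(1+t) - (b-a)/(1+t), b(1+t))` starting at `(a, b) = (y i, z i)`. Along it `z² - yz`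
is constant, so the constraint `Σ z² = Σ yz` survives, and for small `t > 0` the point stays
in `[1, c]²`. The derivative of `z² y e^{-z-y}` along the curve at `t = 0` is
`e^{-a-b} b² (a + a² + 2b - 3ab)`, which is positive for `1 ≤ a, b < 3/2`; so the objective
strictly increases, contradicting maximality.
-/

open Real Filter Topology Finset Function

theorem HasDerivAt.eventually_nhdsGT_lt {f : ℝ → ℝ} {f' x : ℝ} (hf : HasDerivAt f f' x)
    (hf' : 0 < f') : ∀ᶠ t in 𝓝[>] x, f x < f t := by
  filter_upwards [(hasDerivAt_iff_tendsto_slope_left_right.1 hf).2.eventually (lt_mem_nhds hf'),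
    self_mem_nhdsWithin] with t hslope hxt
  exact (slope_pos_iff hxt).1 hslope

theorem sum_apply_update₂ {ι : Type*} [Fintype ι] [DecidableEq ι] (φ : ℝ → ℝ → ℝ)
    (y z : ι → ℝ) (i₀ : ι) (a b : ℝ) :
    ∑ i, φ (update y i₀ a i) (update z i₀ b i) =
      ∑ i, φ (y i) (z i) + (φ a b - φ (y i₀) (z i₀)) := by
  simp_rw [apply_update₂ (fun _ => φ), sum_update_of_mem (mem_univ i₀),
    sum_eq_add_sum_sdiff_singleton_of_mem (mem_univ i₀) (fun i => φ (y i) (z i))]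
  ring

theorem hasDerivAt_sq_mul_mul_exp {Y Z : ℝ → ℝ} {Y' Z' t : ℝ} (hY : HasDerivAt Y Y' t)
    (hZ : HasDerivAt Z Z' t) :
    HasDerivAt (fun s => Z s ^ 2 * Y s * exp (-Z s - Y s))
      (exp (-Z t - Y t) * Z t * (2 * Y t * Z' + Z t * Y' - Z t * Y t * (Z' + Y'))) t := by
  refine (((hZ.fun_pow 2).fun_mul hY).fun_mul (hZ.fun_neg.fun_sub hY).exp).congr_deriv ?_
  norm_num
  ring

noncomputable def curveY (a b t : ℝ) : ℝ := b * (1 + t) - (b - a) / (1 + t)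

theorem curveY_zero (a b : ℝ) : curveY a b 0 = a := by simp [curveY]

theorem le_curveY {a b t : ℝ} (hb : 0 ≤ b) (hab : a ≤ 2 * b) (ht : 0 ≤ t) :
    a ≤ curveY a b t := by
  rw [curveY, le_sub_iff_add_le, ← le_sub_iff_add_le', div_le_iff₀ (by linarith)]
  nlinarith [mul_nonneg ht (mul_nonneg hb ht)]

theorem hasDerivAt_curveY (a b : ℝ) : HasDerivAt (curveY a b) (2 * b - a) 0 := by
  have h1 : HasDerivAt (fun t : ℝ => 1 + t) 1 0 := (hasDerivAt_id 0).const_add 1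
  have := (h1.const_mul b).fun_sub ((hasDerivAt_const (0 : ℝ) (b - a)).fun_div h1 (by norm_num))
  exact this.congr_deriv (by norm_num; ring)

theorem sq_sub_mul_curveY (a b : ℝ) {t : ℝ} (ht : 1 + t ≠ 0) :
    (b * (1 + t)) ^ 2 - curveY a b t * (b * (1 + t)) = b ^ 2 - a * b := by
  rw [curveY]
  field_simp
  ring

theorem exists_improving_pair {a b c : ℝ} (ha1 : 1 ≤ a) (ha : a < c) (hb1 : 1 ≤ b) (hb : b < c)
    (hc : c < 3 / 2) :
    ∃ Y Z : ℝ, (1 ≤ Y ∧ Y ≤ c) ∧ (1 ≤ Z ∧ Z ≤ c) ∧ Z ^ 2 - Y * Z = b ^ 2 - a * b ∧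
      b ^ 2 * a * exp (-b - a) < Z ^ 2 * Y * exp (-Z - Y) := by
  have hZ : HasDerivAt (fun t : ℝ => b * (1 + t)) b 0 := by
    simpa using ((hasDerivAt_id (0 : ℝ)).const_add 1).const_mul b
  have hY := hasDerivAt_curveY a b
  have hD : 0 < exp (-b - a) * b * (2 * a * b + b * (2 * b - a) - b * a * (b + (2 * b - a))) := by
    have hpoly : 0 < a + a ^ 2 + 2 * b - 3 * a * b := by
      nlinarith [mul_nonneg (by linarith : (0 : ℝ) ≤ 3 / 2 - b) (by linarith : (0 : ℝ) ≤ 3 * a - 2),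
        mul_pos (by linarith : (0 : ℝ) < 3 / 2 - a) (by linarith : (0 : ℝ) < 2 - a)]
    have hb0 : 0 < b := by linarith
    rw [show 2 * a * b + b * (2 * b - a) - b * a * (b + (2 * b - a)) =
      b * (a + a ^ 2 + 2 * b - 3 * a * b) by ring]
    positivity
  have h_obj : ∀ᶠ t in 𝓝[>] 0, b ^ 2 * a * exp (-b - a) <
      (b * (1 + t)) ^ 2 * curveY a b t * exp (-(b * (1 + t)) - curveY a b t) := by
    simpa [curveY_zero] using
      (hasDerivAt_sq_mul_mul_exp hY hZ).eventually_nhdsGT_lt (by simpa [curveY_zero] using hD)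
  have hY_lt : ∀ᶠ t in 𝓝[>] 0, curveY a b t < c :=
    nhdsWithin_le_nhds (hY.continuousAt.tendsto.eventually_lt_const (by rwa [curveY_zero]))
  have hZ_lt : ∀ᶠ t in 𝓝[>] 0, b * (1 + t) < c :=
    nhdsWithin_le_nhds (hZ.continuousAt.tendsto.eventually_lt_const (by simpa using hb))
  obtain ⟨t, hlt, hYc, hZc, ht : 0 < t⟩ :=
    (h_obj.and (hY_lt.and (hZ_lt.and self_mem_nhdsWithin))).exists
  refine ⟨curveY a b t, b * (1 + t), ⟨?_, hYc.le⟩, ⟨by nlinarith, hZc.le⟩,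
    sq_sub_mul_curveY a b (by linarith), hlt⟩
  exact ha1.trans (le_curveY (by linarith) (by linarith) ht.le)

theorem programA_case2_general (m : ℕ) (c : ℝ) (hc2 : c < 3 / 2)
    (y z : Fin m → ℝ)
    (hy : ∀ i, 1 ≤ y i ∧ y i ≤ c) (hz : ∀ i, 1 ≤ z i ∧ z i ≤ c)
    (hsum : ∑ i, (z i) ^ 2 = ∑ i, y i * z i)
    (hmax : ∀ y' z' : Fin m → ℝ, (∀ i, 1 ≤ y' i ∧ y' i ≤ c) → (∀ i, 1 ≤ z' i ∧ z' i ≤ c) →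
      (∑ i, (z' i) ^ 2 = ∑ i, y' i * z' i) →
      ∑ i, (z' i) ^ 2 * y' i * Real.exp (-(z' i) - y' i) ≤
        ∑ i, (z i) ^ 2 * y i * Real.exp (-(z i) - y i)) :
    ∀ i, y i = c ∨ z i = c := by
  by_contra! ⟨i₀, hyc, hzc⟩
  obtain ⟨Y, Z, hY, hZ, hYZ, hlt⟩ := exists_improving_pair (hy i₀).1 ((hy i₀).2.lt_of_ne hyc)
    (hz i₀).1 ((hz i₀).2.lt_of_ne hzc) hc2
  have hY' : ∀ i, 1 ≤ update y i₀ Y i ∧ update y i₀ Y i ≤ c := fun i => by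
    rcases eq_or_ne i i₀ with rfl | hi
    · simpa using hY
    · simpa [hi] using hy i
  have hZ' : ∀ i, 1 ≤ update z i₀ Z i ∧ update z i₀ Z i ≤ c := fun i => by
    rcases eq_or_ne i i₀ with rfl | hi
    · simpa using hZ
    · simpa [hi] using hz i
  have hle := hmax _ _ hY' hZ' <| by
    rw [sum_apply_update₂ (fun _ z => z ^ 2) y z i₀ Y Z, sum_apply_update₂ (fun y z => y * z)]
    linarith
  rw [sum_apply_update₂ (fun y z => z ^ 2 * y * exp (-z - y))] at hle
  linarith

/-- Claim (case 2 of Claim A). Let `1 ≤ c < 3/2`. If `(y, z)` maximises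
`Σ z_i²·y_i·e^{−z_i−y_i}` over all tuples with `1 ≤ y_i, z_i ≤ c` and
`Σ z_i² = Σ y_i·z_i`, then for every `i`, `y_i = c` or `z_i = c`. -/
theorem programA_case2 (m : ℕ) (hm : 0 < m) (c : ℝ) (hc1 : 1 ≤ c) (hc2 : c < 3 / 2)
    (y z : Fin m → ℝ)
    (hy : ∀ i, 1 ≤ y i ∧ y i ≤ c) (hz : ∀ i, 1 ≤ z i ∧ z i ≤ c)
    (hsum : ∑ i, (z i) ^ 2 = ∑ i, y i * z i)
    (hmax : ∀ y' z' : Fin m → ℝ, (∀ i, 1 ≤ y' i ∧ y' i ≤ c) → (∀ i, 1 ≤ z' i ∧ z' i ≤ c) →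
      (∑ i, (z' i) ^ 2 = ∑ i, y' i * z' i) →
      ∑ i, (z' i) ^ 2 * y' i * Real.exp (-(z' i) - y' i) ≤
        ∑ i, (z i) ^ 2 * y i * Real.exp (-(z i) - y i)) :
    ∀ i, y i = c ∨ z i = c :=
  programA_case2_general m c hc2 y z hy hz hsum hmax
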